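/- arXiv:2205.15434 — 3 statements merged into one kernel-verified Lean document; each statement's English description precedes it below -/
import Mathlib

section
/- Let n ≥ 1, let M : Fin n → Fin n → ℝ be a payoff matrix, let ς be a mixed strategy over n actions, let γ ≥ 0, and let 0 ≤ ε ≤ 1/n. Then the risk-averse best-response set BR(ς) = { σ ∈ Δ_ε(n) : r(σ, ς, M) ≥ r(σ', ς, M) for all σ' ∈ Δ_ε(n) } is a convex subset of ℝ^n. -/
open Finset

noncomputable section

/-- The ε-constrained simplex: vectors with all coordinates ≥ ε summing to 1. -/
def simplexEps (m : ℕ) (ε : ℝ) : Set (Fin m → ℝ) :=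
  {σ | (∀ i, ε ≤ σ i) ∧ ∑ i, σ i = 1}

/-- Expected utility u(σ, ς, M). -/
def expUtil {m k : ℕ} (σ : Fin m → ℝ) (ς : Fin k → ℝ) (M : Fin m → Fin k → ℝ) : ℝ :=
  ∑ j, ∑ i, σ j * ς i * M j i

/-- Expected payoff of own action j against opponent mixed strategy ς: M̄ j. -/
def meanPay {m k : ℕ} (ς : Fin k → ℝ) (M : Fin m → Fin k → ℝ) (j : Fin m) : ℝ :=
  ∑ i, ς i * M j i

/-- Entries of the ς-weighted covariance matrix Σ_{M,ς}. -/
def covEnt {m k : ℕ} (ς : Fin k → ℝ) (M : Fin m → Fin k → ℝ) (j j' : Fin m) : ℝ :=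
  ∑ i, ς i * (M j i - meanPay ς M j) * (M j' i - meanPay ς M j')

/-- Utility variance Var(σ, ς, M) = σᵀ Σ_{M,ς} σ. -/
def utilVar {m k : ℕ} (σ : Fin m → ℝ) (ς : Fin k → ℝ) (M : Fin m → Fin k → ℝ) : ℝ :=
  ∑ j, ∑ j', σ j * σ j' * covEnt ς M j j'

/-- Total utility r(σ, ς, M) = u(σ, ς, M) − γ · Var(σ, ς, M). -/
def totalUtil {m k : ℕ} (γ : ℝ) (σ : Fin m → ℝ) (ς : Fin k → ℝ)
    (M : Fin m → Fin k → ℝ) : ℝ :=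
  expUtil σ ς M - γ * utilVar σ ς M

/-! The variance is `Var(σ) = ∑ᵢ ςᵢ (∑ⱼ σⱼ (M j i − M̄ j))²`, a nonnegative combination of squares
of linear forms in `σ`, hence convex, while `u` is linear in `σ`. So for `γ ≥ 0` the total utility
`r = u − γ Var` is concave, and the set of maximisers of a concave function on the convex set
`Δ_ε(n)` is convex. -/

section Convexity

variable {𝕜 E β ι : Type*} [Semiring 𝕜] [PartialOrder 𝕜] [AddCommMonoid E]
  [AddCommMonoid β] [PartialOrder β] [IsOrderedAddMonoid β] [SMul 𝕜 E] [Module 𝕜 β]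
  {s : Set E}

theorem convexOn_sum {t : Finset ι} {f : ι → E → β} (hs : Convex 𝕜 s)
    (hf : ∀ i ∈ t, ConvexOn 𝕜 s (f i)) : ConvexOn 𝕜 s fun x => ∑ i ∈ t, f i x := by
  classical
  induction t using Finset.induction_on with
  | empty => simpa using convexOn_const (0 : β) hs
  | insert i t hi ih =>
    simp_rw [Finset.sum_insert hi]
    exact (hf i (mem_insert_self i t)).add (ih fun j hj => hf j (mem_insert_of_mem hj))

theorem ConcaveOn.convex_setOf_forall_le [PosSMulMono 𝕜 β] {f : E → β}
    (hf : ConcaveOn 𝕜 s f) : Convex 𝕜 {x ∈ s | ∀ y ∈ s, f y ≤ f x} :=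
  fun _ hx _ hy _ _ ha hb hab =>
    ⟨hf.1 hx.1 hy.1 ha hb hab, fun z hz =>
      (hf.convex_ge (f z) ⟨hx.1, hx.2 z hz⟩ ⟨hy.1, hy.2 z hz⟩ ha hb hab).2⟩

end Convexity

theorem convex_simplexEps (m : ℕ) (ε : ℝ) : Convex ℝ (simplexEps m ε) := by
  rintro σ ⟨hσε, hσ1⟩ τ ⟨hτε, hτ1⟩ a b ha hb hab
  refine ⟨fun i => ?_, ?_⟩
  · calc ε = a * ε + b * ε := by rw [← add_mul, hab, one_mul]
      _ ≤ a * σ i + b * τ i := by gcongr; exacts [hσε i, hτε i]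
  · simp only [Pi.add_apply, Pi.smul_apply, smul_eq_mul, sum_add_distrib, ← mul_sum, hσ1, hτ1,
      mul_one, hab]

section Utility

variable {m k : ℕ} (ς : Fin k → ℝ) (M : Fin m → Fin k → ℝ)

theorem expUtil_eq_sum_mul_meanPay (σ : Fin m → ℝ) :
    expUtil σ ς M = ∑ j, σ j * meanPay ς M j := by
  simp only [expUtil, meanPay, mul_sum, mul_assoc]

theorem utilVar_eq_sum_mul_sq (σ : Fin m → ℝ) :
    utilVar σ ς M = ∑ i, ς i * (∑ j, σ j * (M j i - meanPay ς M j)) ^ 2 := by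
  simp only [utilVar, covEnt, mul_sum]
  rw [sum_comm_cycle]
  refine sum_congr rfl fun i _ => ?_
  rw [sq, sum_mul_sum, mul_sum]
  refine sum_congr rfl fun j _ => ?_
  rw [mul_sum]
  exact sum_congr rfl fun j' _ => by ring

theorem concaveOn_expUtil : ConcaveOn ℝ Set.univ fun σ => expUtil σ ς M := by
  simp only [expUtil_eq_sum_mul_meanPay]
  exact (Fintype.linearCombination ℝ (meanPay ς M)).concaveOn convex_univ

theorem convexOn_utilVar (hς : ∀ i, 0 ≤ ς i) : ConvexOn ℝ Set.univ fun σ => utilVar σ ς M := by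
  simp only [utilVar_eq_sum_mul_sq]
  refine convexOn_sum convex_univ fun i _ => ?_
  have hsq := ((even_two.convexOn_pow (𝕜 := ℝ)).comp_linearMap
    (Fintype.linearCombination ℝ fun j => M j i - meanPay ς M j)).smul (hς i)
  simpa only [Set.preimage_univ, Function.comp_apply, Fintype.linearCombination_apply,
    smul_eq_mul] using hsq

theorem concaveOn_totalUtil {γ : ℝ} (hγ : 0 ≤ γ) (hς : ∀ i, 0 ≤ ς i) :
    ConcaveOn ℝ Set.univ fun σ => totalUtil γ σ ς M :=
  (concaveOn_expUtil ς M).sub ((convexOn_utilVar ς M hς).smul hγ)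

end Utility

theorem bestResponse_convex_general (n : ℕ) (M : Fin n → Fin n → ℝ)
    (ς : Fin n → ℝ) (hς₀ : ∀ i, 0 ≤ ς i)
    (γ : ℝ) (hγ : 0 ≤ γ) (ε : ℝ) :
    Convex ℝ {σ ∈ simplexEps n ε |
      ∀ σ' ∈ simplexEps n ε, totalUtil γ σ' ς M ≤ totalUtil γ σ ς M} :=
  ((concaveOn_totalUtil ς M hγ hς₀).subset (Set.subset_univ _)
    (convex_simplexEps n ε)).convex_setOf_forall_le

theorem bestResponse_convex (n : ℕ) (hn : 1 ≤ n) (M : Fin n → Fin n → ℝ)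
    (ς : Fin n → ℝ) (hς₀ : ∀ i, 0 ≤ ς i) (hς₁ : ∑ i, ς i = 1)
    (γ : ℝ) (hγ : 0 ≤ γ) (ε : ℝ) (hε : 0 ≤ ε) (hε' : ε ≤ 1 / (n : ℝ)) :
    Convex ℝ {σ ∈ simplexEps n ε |
      ∀ σ' ∈ simplexEps n ε, totalUtil γ σ' ς M ≤ totalUtil γ σ ς M} :=
  bestResponse_convex_general n M ς hς₀ γ hγ ε
end
end

section
/- Let n ≥ 1, let M : Fin n → Fin n → ℝ be a payoff matrix, let γ ∈ ℝ, and let 0 ≤ ε ≤ 1/n. The risk-averse best-response correspondence has a closed graph: if (σₜ) and (ςₜ) are sequences in the ε-constrained simplex Δ_ε(n) with σₜ → σ and ςₜ → ς (componentwise), and for every t the strategy σₜ maximizes r(·, ςₜ, M) over Δ_ε(n), then σ maximizes r(·, ς, M) over Δ_ε(n). -/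
open Finset

noncomputable section

set_option maxHeartbeats 1000000 in
lemma totalUtil_cont {m k : ℕ} (γ : ℝ) (M : Fin m → Fin k → ℝ) :
    Continuous (fun p : (Fin m → ℝ) × (Fin k → ℝ) => totalUtil γ p.1 p.2 M) := by
  unfold totalUtil expUtil utilVar covEnt meanPay
  fun_prop

set_option maxHeartbeats 1000000 in
theorem bestResponse_closed_graph (n : ℕ) (hn : 1 ≤ n) (M : Fin n → Fin n → ℝ)
    (γ : ℝ) (ε : ℝ) (hε : 0 ≤ ε) (hε' : ε ≤ 1 / (n : ℝ))
    (σseq ςseq : ℕ → Fin n → ℝ)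
    (hσmem : ∀ t, σseq t ∈ simplexEps n ε) (hςmem : ∀ t, ςseq t ∈ simplexEps n ε)
    (σ ς : Fin n → ℝ)
    (hσlim : ∀ i, Filter.Tendsto (fun t => σseq t i) Filter.atTop (nhds (σ i)))
    (hςlim : ∀ i, Filter.Tendsto (fun t => ςseq t i) Filter.atTop (nhds (ς i)))
    (hmax : ∀ t, ∀ σ' ∈ simplexEps n ε,
      totalUtil γ σ' (ςseq t) M ≤ totalUtil γ (σseq t) (ςseq t) M) :
    ∀ σ' ∈ simplexEps n ε, totalUtil γ σ' ς M ≤ totalUtil γ σ ς M := by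
  intro σ' hσ'
  have hσten : Filter.Tendsto σseq Filter.atTop (nhds σ) := tendsto_pi_nhds.2 hσlim
  have hςten : Filter.Tendsto ςseq Filter.atTop (nhds ς) := tendsto_pi_nhds.2 hςlim
  have h1 : Filter.Tendsto (fun t => totalUtil γ σ' (ςseq t) M) Filter.atTop
      (nhds (totalUtil γ σ' ς M)) := by
    have hpair : Filter.Tendsto (fun t => ((σ' : Fin n → ℝ), ςseq t)) Filter.atTop
        (nhds (σ', ς)) := Filter.Tendsto.prodMk_nhds tendsto_const_nhds hςten
    have := ((totalUtil_cont γ M).tendsto (σ', ς)).comp hpair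
    simpa [Function.comp_def] using this
  have h2 : Filter.Tendsto (fun t => totalUtil γ (σseq t) (ςseq t) M) Filter.atTop
      (nhds (totalUtil γ σ ς M)) := by
    have hpair : Filter.Tendsto (fun t => (σseq t, ςseq t)) Filter.atTop
        (nhds (σ, ς)) := Filter.Tendsto.prodMk_nhds hσten hςten
    have := ((totalUtil_cont γ M).tendsto (σ, ς)).comp hpair
    simpa [Function.comp_def] using this
  exact le_of_tendsto_of_tendsto' h1 h2 (fun t => hmax t σ' hσ')
end
end

section
/- Let n₁, n₂ ≥ 1, let M¹ : Fin n₁ → Fin n₂ → ℝ and M² : Fin n₂ → Fin n₁ → ℝ be payoff matrices, let γ₁, γ₂ ∈ ℝ, and let 0 ≤ ε ≤ min (1/n₁) (1/n₂). Suppose (σₜ) and (ςₜ) are sequences with σₜ ∈ Δ_ε(n₁) and ςₜ ∈ Δ_ε(n₂), and let Z¹ₜ = (1/t) ∑_{s=1}^{t} σₛ and Z²ₜ = (1/t) ∑_{s=1}^{t} ςₛ denote the time-average strategies. If for every t the strategy σ_{t+1} maximizes r(·, Z²ₜ, M¹) (with parameter γ₁) over Δ_ε(n₁) and ς_{t+1}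 maximizes r(·, Z¹ₜ, M²) (with parameter γ₂) over Δ_ε(n₂), and if σₜ → σ and ςₜ → ς componentwise, then (σ, ς) is a risk-averse equilibrium: σ maximizes r(·, ς, M¹) over Δ_ε(n₁) and ς maximizes r(·, σ, M²) over Δ_ε(n₂). -/
/-!
Cesàro averages of a convergent sequence converge to the same limit, so the time averages
`Z¹ₜ, Z²ₜ` converge to `σ, ς`. The total utility `r` is a polynomial in both strategies, hence
jointly continuous, so the best-response inequalities `r(σ', Z²ₜ) ≤ r(σₜ₊₁, Z²ₜ)` pass to the limit.
-/

open Finset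

noncomputable section

open Filter Topology

lemma continuous_totalUtil {m k : ℕ} (γ : ℝ) (M : Fin m → Fin k → ℝ) :
    Continuous fun p : (Fin m → ℝ) × (Fin k → ℝ) => totalUtil γ p.1 p.2 M := by
  unfold totalUtil expUtil utilVar covEnt meanPay
  fun_prop

/-- The time average `Z_t = (1/t) ∑_{s=1}^t v_s` (junk value `0` at `t = 0`). -/
def timeAverage {ι : Type*} (v : ℕ → ι → ℝ) (t : ℕ) : ι → ℝ :=
  fun i => (1 / (t : ℝ)) * ∑ s ∈ Icc 1 t, v s i

lemma Filter.Tendsto.cesaro_Icc {u : ℕ → ℝ} {x : ℝ} (h : Tendsto u atTop (𝓝 x)) :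
    Tendsto (fun t : ℕ => (1 / (t : ℝ)) * ∑ s ∈ Icc 1 t, u s) atTop (𝓝 x) := by
  have hsum (t : ℕ) : ∑ s ∈ Icc 1 t, u s = ∑ s ∈ range t, u (s + 1) := by
    rw [range_eq_Ico, sum_Ico_add' u 0 t 1, Ico_add_one_right_eq_Icc]
  simpa only [hsum, one_div, Function.comp_def] using (h.comp (tendsto_add_atTop_nat 1)).cesaro

lemma tendsto_timeAverage {ι : Type*} {v : ℕ → ι → ℝ} {x : ι → ℝ}
    (h : ∀ i, Tendsto (v · i) atTop (𝓝 (x i))) :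
    Tendsto (timeAverage v) atTop (𝓝 x) :=
  tendsto_pi_nhds.2 fun i => (h i).cesaro_Icc

lemma IsMaxOn.of_tendsto {ι α β : Type*} [TopologicalSpace α] [TopologicalSpace β]
    {l : Filter ι} [l.NeBot] {f : α → β → ℝ} (hf : Continuous (Function.uncurry f))
    {S : Set α} {x : ι → α} {z : ι → β} {a : α} {b : β}
    (hx : Tendsto x l (𝓝 a)) (hz : Tendsto z l (𝓝 b))
    (hmax : ∀ᶠ t in l, IsMaxOn (f · (z t)) S (x t)) :
    IsMaxOn (f · b) S a := fun a' ha' =>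
  le_of_tendsto_of_tendsto
    ((hf.tendsto (a', b)).comp (tendsto_const_nhds.prodMk_nhds hz))
    ((hf.tendsto (a, b)).comp (hx.prodMk_nhds hz))
    (hmax.mono fun _ ht => ht ha')

lemma isMaxOn_totalUtil_of_tendsto {m k : ℕ} (γ : ℝ) (M : Fin m → Fin k → ℝ)
    {S : Set (Fin m → ℝ)} {x : ℕ → Fin m → ℝ} {w : ℕ → Fin k → ℝ}
    {a : Fin m → ℝ} {b : Fin k → ℝ}
    (hx : ∀ i, Tendsto (x · i) atTop (𝓝 (a i))) (hw : ∀ i, Tendsto (w · i) atTop (𝓝 (b i)))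
    (hbr : ∀ t : ℕ, 1 ≤ t → IsMaxOn (totalUtil γ · (timeAverage w t) M) S (x (t + 1))) :
    IsMaxOn (totalUtil γ · b M) S a :=
  IsMaxOn.of_tendsto (f := fun σ ς => totalUtil γ σ ς M) (continuous_totalUtil γ M)
    ((tendsto_pi_nhds.2 hx).comp (tendsto_add_atTop_nat 1)) (tendsto_timeAverage hw)
    (eventually_ge_atTop 1 |>.mono hbr)

theorem sfp_limit_is_rae_general (n₁ n₂ : ℕ)
    (M₁ : Fin n₁ → Fin n₂ → ℝ) (M₂ : Fin n₂ → Fin n₁ → ℝ)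
    (γ₁ γ₂ : ℝ) (ε : ℝ)
    (σseq : ℕ → Fin n₁ → ℝ) (ςseq : ℕ → Fin n₂ → ℝ)
    (hσbr : ∀ t : ℕ, 1 ≤ t → ∀ σ' ∈ simplexEps n₁ ε,
      totalUtil γ₁ σ' (fun i => (1 / (t : ℝ)) * ∑ s ∈ Finset.Icc 1 t, ςseq s i) M₁ ≤
        totalUtil γ₁ (σseq (t + 1))
          (fun i => (1 / (t : ℝ)) * ∑ s ∈ Finset.Icc 1 t, ςseq s i) M₁)
    (hςbr : ∀ t : ℕ, 1 ≤ t → ∀ ς' ∈ simplexEps n₂ ε,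
      totalUtil γ₂ ς' (fun i => (1 / (t : ℝ)) * ∑ s ∈ Finset.Icc 1 t, σseq s i) M₂ ≤
        totalUtil γ₂ (ςseq (t + 1))
          (fun i => (1 / (t : ℝ)) * ∑ s ∈ Finset.Icc 1 t, σseq s i) M₂)
    (σ : Fin n₁ → ℝ) (ς : Fin n₂ → ℝ)
    (hσlim : ∀ i, Filter.Tendsto (fun t => σseq t i) Filter.atTop (nhds (σ i)))
    (hςlim : ∀ i, Filter.Tendsto (fun t => ςseq t i) Filter.atTop (nhds (ς i))) :
    (∀ σ' ∈ simplexEps n₁ ε, totalUtil γ₁ σ' ς M₁ ≤ totalUtil γ₁ σ ς M₁) ∧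
      (∀ ς' ∈ simplexEps n₂ ε, totalUtil γ₂ ς' σ M₂ ≤ totalUtil γ₂ ς σ M₂) :=
  ⟨isMaxOn_totalUtil_of_tendsto γ₁ M₁ hσlim hςlim hσbr,
    isMaxOn_totalUtil_of_tendsto γ₂ M₂ hςlim hσlim hςbr⟩

theorem sfp_limit_is_rae (n₁ n₂ : ℕ) (hn₁ : 1 ≤ n₁) (hn₂ : 1 ≤ n₂)
    (M₁ : Fin n₁ → Fin n₂ → ℝ) (M₂ : Fin n₂ → Fin n₁ → ℝ)
    (γ₁ γ₂ : ℝ) (ε : ℝ) (hε : 0 ≤ ε)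
    (hε' : ε ≤ min (1 / (n₁ : ℝ)) (1 / (n₂ : ℝ)))
    (σseq : ℕ → Fin n₁ → ℝ) (ςseq : ℕ → Fin n₂ → ℝ)
    (hσmem : ∀ t, σseq t ∈ simplexEps n₁ ε) (hςmem : ∀ t, ςseq t ∈ simplexEps n₂ ε)
    (hσbr : ∀ t : ℕ, 1 ≤ t → ∀ σ' ∈ simplexEps n₁ ε,
      totalUtil γ₁ σ' (fun i => (1 / (t : ℝ)) * ∑ s ∈ Finset.Icc 1 t, ςseq s i) M₁ ≤
        totalUtil γ₁ (σseq (t + 1))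
          (fun i => (1 / (t : ℝ)) * ∑ s ∈ Finset.Icc 1 t, ςseq s i) M₁)
    (hςbr : ∀ t : ℕ, 1 ≤ t → ∀ ς' ∈ simplexEps n₂ ε,
      totalUtil γ₂ ς' (fun i => (1 / (t : ℝ)) * ∑ s ∈ Finset.Icc 1 t, σseq s i) M₂ ≤
        totalUtil γ₂ (ςseq (t + 1))
          (fun i => (1 / (t : ℝ)) * ∑ s ∈ Finset.Icc 1 t, σseq s i) M₂)
    (σ : Fin n₁ → ℝ) (ς : Fin n₂ → ℝ)
    (hσlim : ∀ i, Filter.Tendsto (fun t => σseq t i) Filter.atTop (nhds (σ i)))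
    (hςlim : ∀ i, Filter.Tendsto (fun t => ςseq t i) Filter.atTop (nhds (ς i))) :
    (∀ σ' ∈ simplexEps n₁ ε, totalUtil γ₁ σ' ς M₁ ≤ totalUtil γ₁ σ ς M₁) ∧
      (∀ ς' ∈ simplexEps n₂ ε, totalUtil γ₂ ς' σ M₂ ≤ totalUtil γ₂ ς σ M₂) :=
  sfp_limit_is_rae_general n₁ n₂ M₁ M₂ γ₁ γ₂ ε σseq ςseq hσbr hςbr σ ς hσlim hςlim
end
end
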